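/- There is a bijection between finite simple graphs equipped with a perfect matching and locally 2-colored graphs, under which alternating paths for the matching correspond to compatible paths, and alternating cycles correspond to compatible cycles. -/

import Mathlib

/-- A locally 2-colored (multi)graph: for each (unordered) pair of distinct
vertices `u, v` and each pair of colors `i` at `u` and `j` at `v`
(`false` = red, `true` = blue), there may be an edge between `u` and `v`
colored `i` at `u` and `j` at `v`.  Parallel edges automatically differ in
color at some endpoint. -/
structure Loc2Col (V : Type*) where
  A : V → V → Bool → Bool → Prop
  symm : ∀ u v i j, A u v i j → A v u j i
  ne : ∀ u v i j, A u v i j → u ≠ v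

/-- The canonical perfect matching on `V × Bool`: the edges `(v,false)−(v,true)`. -/
def M0 (V : Type*) : Set (Sym2 (V × Bool)) :=
  {e | ∃ v : V, e = s((v, false), (v, true))}

def IsPerfectMatching {W : Type*} (G : SimpleGraph W) (M : Set (Sym2 W)) : Prop :=
  M ⊆ G.edgeSet ∧ ∀ v : W, ∃! e, e ∈ M ∧ v ∈ e

def AltList {W : Type*} (M : Set (Sym2 W)) (l : List (Sym2 W)) : Prop :=
  List.Chain' (fun e f => (e ∈ M ↔ f ∉ M)) l

def AltCyclic {W : Type*} {G : SimpleGraph W} (M : Set (Sym2 W)) {v : W}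
    (C : G.Walk v v) : Prop :=
  ∀ i : Fin C.edges.length,
    (C.edges.get i ∈ M ↔
      C.edges.get ⟨(i.val + 1) % C.edges.length,
        Nat.mod_lt _ (Nat.lt_of_le_of_lt (Nat.zero_le _) i.isLt)⟩ ∉ M)

/-- A compatible path from `a` to `b` in a locally 2-colored graph, given by
its list of steps `(u, v, i, j)` (an edge from `u` to `v`, colored `i` at `u`
and `j` at `v`): consecutive steps share their intermediate vertex, at which
the two colors differ, and no vertex is repeated. -/
def IsCompatPath {V : Type*} (L : Loc2Col V) (a b : V)
    (S : List (V × V × Bool × Bool)) : Prop :=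
  S ≠ [] ∧ (∀ s ∈ S, L.A s.1 s.2.1 s.2.2.1 s.2.2.2) ∧
  List.Chain' (fun s t => s.2.1 = t.1 ∧ s.2.2.2 ≠ t.2.2.1) S ∧
  (∀ s ∈ S.head?, s.1 = a) ∧ (∀ s ∈ S.getLast?, s.2.1 = b) ∧
  (a :: S.map (fun s => s.2.1)).Nodup

/-- A compatible cycle through `a`, defined analogously (with the color
condition also at the closing vertex `a`). -/
def IsCompatCycle {V : Type*} (L : Loc2Col V) (a : V)
    (S : List (V × V × Bool × Bool)) : Prop :=
  S ≠ [] ∧ (∀ s ∈ S, L.A s.1 s.2.1 s.2.2.1 s.2.2.2) ∧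
  List.Chain' (fun s t => s.2.1 = t.1 ∧ s.2.2.2 ≠ t.2.2.1) S ∧
  (∀ s ∈ S.head?, s.1 = a) ∧ (∀ s ∈ S.getLast?, s.2.1 = a) ∧
  (∀ s ∈ S.getLast?, ∀ t ∈ S.head?, s.2.2.2 ≠ t.2.2.1) ∧
  (S.map (fun s => s.1)).Nodup

section Aux
variable {V : Type*}

lemma mem_M0_iff {u v : V} {i j : Bool} :
    s((u,i),(v,j)) ∈ M0 V ↔ u = v ∧ i ≠ j := by
  constructor
  · rintro ⟨w, hw⟩
    rw [Sym2.eq_iff] at hw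
    rcases hw with ⟨h1, h2⟩ | ⟨h1, h2⟩ <;>
      (cases h1; cases h2; simp)
  · rintro ⟨rfl, hij⟩
    cases i <;> cases j <;> simp at hij ⊢
    · exact ⟨u, rfl⟩
    · exact ⟨u, Sym2.eq_swap⟩

def HG (L : Loc2Col V) : SimpleGraph (V × Bool) where
  Adj x y := (x.1 = y.1 ∧ x.2 ≠ y.2) ∨ L.A x.1 y.1 x.2 y.2
  symm := by
    constructor
    rintro ⟨u,i⟩ ⟨v,j⟩ (⟨h1,h2⟩|h)
    · exact Or.inl ⟨h1.symm, h2.symm⟩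
    · exact Or.inr (L.symm _ _ _ _ h)
  loopless := by
    constructor
    rintro ⟨u,i⟩ (⟨h1,h2⟩|h)
    · exact h2 rfl
    · exact L.ne _ _ _ _ h rfl

lemma HG_adj {L : Loc2Col V} {u v : V} {i j : Bool} :
    (HG L).Adj (u,i) (v,j) ↔ (u = v ∧ i ≠ j) ∨ L.A u v i j := Iff.rfl

lemma HG_adj_of_A {L : Loc2Col V} {u v : V} {i j : Bool} (h : L.A u v i j) :
    (HG L).Adj (u,i) (v,j) := Or.inr h

lemma HG_adj_match {L : Loc2Col V} {u : V} {i j : Bool} (h : i ≠ j) :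
    (HG L).Adj (u,i) (u,j) := Or.inl ⟨rfl, h⟩

lemma A_of_adj_notM0 {L : Loc2Col V} {u v : V} {i j : Bool}
    (h : (HG L).Adj (u,i) (v,j)) (hm : s((u,i),(v,j)) ∉ M0 V) :
    L.A u v i j ∧ u ≠ v := by
  rcases h with ⟨h1, h2⟩ | h
  · exact absurd (mem_M0_iff.2 ⟨h1, h2⟩) hm
  · exact ⟨h, L.ne _ _ _ _ h⟩

lemma HG_pm (L : Loc2Col V) : IsPerfectMatching (HG L) (M0 V) := by
  constructor
  · rintro e ⟨v, rfl⟩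
    exact HG_adj_match (by simp)
  · rintro ⟨v, i⟩
    refine ⟨s((v, false), (v, true)), ⟨⟨v, rfl⟩, ?_⟩, ?_⟩
    · cases i <;> simp
    · rintro e ⟨⟨w, rfl⟩, hv⟩
      simp only [Sym2.mem_iff, Prod.mk.injEq] at hv
      rcases hv with ⟨rfl, _⟩ | ⟨rfl, _⟩ <;> rfl

lemma pm_adj {H : SimpleGraph (V × Bool)} (hH : IsPerfectMatching H (M0 V)) (v : V) :
    H.Adj (v, false) (v, true) := hH.1 ⟨v, rfl⟩

def FEquiv (V : Type*) : Loc2Col V ≃ {H : SimpleGraph (V × Bool) // IsPerfectMatching H (M0 V)} where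
  toFun L := ⟨HG L, HG_pm L⟩
  invFun H := ⟨fun u v i j => u ≠ v ∧ H.1.Adj (u,i) (v,j),
    fun u v i j ⟨hne, h⟩ => ⟨hne.symm, h.symm⟩,
    fun u v i j h => h.1⟩
  left_inv L := by
    have : (fun u v i j => u ≠ v ∧ (HG L).Adj (u,i) (v,j)) = L.A := by
      funext u v i j
      apply propext
      constructor
      · rintro ⟨hne, ⟨h1, _⟩ | h⟩
        · exact absurd h1 hne
        · exact h
      · intro h
        exact ⟨L.ne _ _ _ _ h, Or.inr h⟩
    cases L
    simpa using this
  right_inv H := by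
    apply Subtype.ext
    apply SimpleGraph.ext
    funext x y
    obtain ⟨u, i⟩ := x
    obtain ⟨v, j⟩ := y
    apply propext
    simp only [HG_adj]
    constructor
    · rintro (⟨rfl, hij⟩ | ⟨_, h⟩)
      · cases i <;> cases j <;> simp at hij ⊢
        · exact pm_adj H.2 u
        · exact (pm_adj H.2 u).symm
      · exact h
    · intro h
      by_cases huv : u = v
      · subst huv
        refine Or.inl ⟨rfl, ?_⟩
        rintro rfl
        exact H.1.loopless.irrefl _ h
      · exact Or.inr ⟨huv, h⟩

end Aux

lemma cyc_iff {α : Type*} (R : α → α → Prop) (l : List α) :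
    (∀ i : Fin l.length, R (l.get i) (l.get ⟨(i.val + 1) % l.length,
        Nat.mod_lt _ (Nat.lt_of_le_of_lt (Nat.zero_le _) i.isLt)⟩)) ↔
    (List.Chain' R l ∧ ∀ x ∈ l.getLast?, ∀ y ∈ l.head?, R x y) := by
  rcases eq_or_ne l [] with rfl | hne
  · constructor
    · intro _; exact ⟨List.isChain_nil, by simp⟩
    · intro _ i; exact absurd i.isLt (by simp)
  have hlen : 0 < l.length := List.length_pos_iff.2 hne
  have hgl : l.getLast? = some (l.get ⟨l.length - 1, by omega⟩) := by
    rw [List.getLast?_eq_getLast hne]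
    simp [List.getLast_eq_getElem]
  have hhd : l.head? = some (l.get ⟨0, hlen⟩) := by
    cases l with
    | nil => exact absurd rfl hne
    | cons a t => rfl
  constructor
  · intro h
    refine ⟨List.isChain_iff_getElem.2 fun i hi => ?_, fun x hx y hy => ?_⟩
    · have h2 := h ⟨i, by omega⟩
      have he : (⟨((⟨i, by omega⟩ : Fin l.length).val + 1) % l.length,
          Nat.mod_lt _ (Nat.lt_of_le_of_lt (Nat.zero_le _) (⟨i, by omega⟩ : Fin l.length).isLt)⟩ : Fin l.length)
          = ⟨i + 1, by omega⟩ := by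
        apply Fin.ext
        simp [Nat.mod_eq_of_lt (show i + 1 < l.length by omega)]
      rwa [he] at h2
    · have h2 := h ⟨l.length - 1, by omega⟩
      have he : (⟨((⟨l.length - 1, by omega⟩ : Fin l.length).val + 1) % l.length,
          Nat.mod_lt _ (Nat.lt_of_le_of_lt (Nat.zero_le _) (⟨l.length - 1, by omega⟩ : Fin l.length).isLt)⟩ : Fin l.length)
          = ⟨0, hlen⟩ := by
        apply Fin.ext
        simp [Nat.sub_add_cancel hlen]
      rw [he] at h2
      rw [hgl, Option.mem_some_iff] at hx
      rw [hhd, Option.mem_some_iff] at hy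
      subst hx
      subst hy
      exact h2
  · rintro ⟨hc, hw⟩ ⟨i, hi⟩
    rcases lt_or_ge (i + 1) l.length with h1 | h1
    · have he : (⟨((⟨i, hi⟩ : Fin l.length).val + 1) % l.length,
          Nat.mod_lt _ (Nat.lt_of_le_of_lt (Nat.zero_le _) (⟨i, hi⟩ : Fin l.length).isLt)⟩ : Fin l.length)
          = ⟨i + 1, h1⟩ := by
        apply Fin.ext
        simp [Nat.mod_eq_of_lt h1]
      rw [he]
      exact List.isChain_iff_getElem.1 hc i (by omega)
    · have hieq : i = l.length - 1 := by omega
      subst hieq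
      have he : (⟨((⟨l.length - 1, hi⟩ : Fin l.length).val + 1) % l.length,
          Nat.mod_lt _ (Nat.lt_of_le_of_lt (Nat.zero_le _) (⟨l.length - 1, hi⟩ : Fin l.length).isLt)⟩ : Fin l.length)
          = ⟨0, hlen⟩ := by
        apply Fin.ext
        simp [Nat.sub_add_cancel hlen]
      rw [he]
      exact hw _ (by rw [hgl]; rfl) _ (by rw [hhd]; rfl)

section Shift
variable {V : Type*}

abbrev Step (V : Type*) := V × V × Bool × Bool

lemma shift_map (S : List (Step V)) (a : V)
    (hc : List.Chain' (fun s t => s.2.1 = t.1 ∧ s.2.2.2 ≠ t.2.2.1) S)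
    (hh : ∀ s ∈ S.head?, s.1 = a) (hne : S ≠ []) :
    S.map (fun s => s.1) = a :: (S.map (fun s => s.2.1)).dropLast := by
  induction S generalizing a with
  | nil => exact absurd rfl hne
  | cons s T ih =>
    simp only [List.head?_cons, Option.mem_some_iff, forall_eq, forall_eq'] at hh
    cases T with
    | nil => simp [hh]
    | cons t R =>
      have hst : s.2.1 = t.1 := (List.isChain_cons_cons.1 hc).1.1
      have ih2 := ih (a := t.1) (List.isChain_cons_cons.1 hc).2 (by simp) (by simp)
      have hd : (s.2.1 :: (t :: R).map (fun s => s.2.1)).dropLast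
          = s.2.1 :: ((t :: R).map (fun s => s.2.1)).dropLast :=
        List.dropLast_cons_of_ne_nil (by simp)
      simp only [List.map_cons] at ih2 hd ⊢
      rw [ih2, hd]
      simp [hh, hst]

lemma last_snd_map {S : List (Step V)} {b : V} (hne : S ≠ [])
    (hl : ∀ s ∈ S.getLast?, s.2.1 = b) :
    (S.map (fun s => s.2.1)).getLast? = some b := by
  rw [List.getLast?_map]
  rw [List.getLast?_eq_getLast hne] at hl ⊢
  simp only [Option.mem_some_iff, forall_eq] at hl
  simp [hl]

lemma snd_map_eq {S : List (Step V)} {b : V} (hne : S ≠ [])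
    (hl : ∀ s ∈ S.getLast?, s.2.1 = b) :
    S.map (fun s => s.2.1) = (S.map (fun s => s.2.1)).dropLast ++ [b] := by
  have h1 : S.map (fun s => s.2.1) ≠ [] := by simpa using hne
  conv_lhs => rw [← List.dropLast_append_getLast h1]
  have h2 := last_snd_map hne hl
  rw [List.getLast?_eq_getLast h1, Option.some_inj] at h2
  rw [h2]

end Shift

open SimpleGraph Walk

section Fwd
variable {V : Type*} {L : Loc2Col V}

lemma fwdML (b : V) : ∀ (S : List (Step V)) (a : V) (s : Step V),
    IsCompatPath L a b (s :: S) →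
    ∃ (j : Bool) (P : (HG L).Walk (a, s.2.2.1) (b, j)),
      P.IsPath ∧ AltList (M0 V) P.edges ∧
      (∀ e ∈ P.edges.head?, e ∉ M0 V) ∧
      (∀ e ∈ P.edges.getLast?, e ∉ M0 V) ∧
      (∀ x ∈ P.support, x.1 ∈ a :: (s :: S).map (fun t => t.2.1)) ∧
      (∀ x ∈ P.support, x.1 = a → x.2 = s.2.2.1) ∧
      (∀ x ∈ P.support, x.1 = b → x.2 = j) ∧
      (∀ t ∈ (s :: S).getLast?, t.2.2.2 = j) := by
  intro S
  induction S with
  | nil =>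
    rintro a ⟨s1, s2, s3, s4⟩ ⟨-, hsteps, -, hhead, hlast, hnodup⟩
    simp only [List.head?_cons, List.getLast?_singleton, Option.mem_some_iff,
      forall_eq, forall_eq'] at hhead hlast
    subst hhead
    subst hlast
    have hab : s1 ≠ s2 := by simpa using hnodup
    have hA : L.A s1 s2 s3 s4 := hsteps (s1,s2,s3,s4) (List.mem_singleton_self _)
    refine ⟨s4, Walk.cons (HG_adj_of_A hA) Walk.nil, ?_, ?_, ?_, ?_, ?_, ?_, ?_, ?_⟩
    · simp [Walk.cons_isPath_iff, hab]
    · simp [AltList, List.Chain']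
    · intro e he
      simp only [Walk.edges_cons, Walk.edges_nil, List.head?_cons,
        Option.mem_some_iff] at he
      subst he
      exact fun h => hab (mem_M0_iff.1 h).1
    · intro e he
      simp only [Walk.edges_cons, Walk.edges_nil, List.getLast?_singleton,
        Option.mem_some_iff] at he
      subst he
      exact fun h => hab (mem_M0_iff.1 h).1
    · intro x hx
      simp only [Walk.support_cons, Walk.support_nil, List.mem_cons,
        List.mem_singleton] at hx
      rcases hx with rfl | rfl | h
      · simp
      · simp
      · simp at h
    · intro x hx
      simp only [Walk.support_cons, Walk.support_nil, List.mem_cons,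
        List.mem_singleton] at hx
      rcases hx with rfl | rfl | h
      · intro _; rfl
      · intro h; exact absurd h.symm hab
      · simp at h
    · intro x hx
      simp only [Walk.support_cons, Walk.support_nil, List.mem_cons,
        List.mem_singleton] at hx
      rcases hx with rfl | rfl | h
      · intro h; exact absurd h hab
      · intro _; rfl
      · simp at h
    · simp
  | cons t S' ih =>
    rintro a ⟨s1, s2, s3, s4⟩ ⟨-, hsteps, hchain, hhead, hlast, hnodup⟩
    simp only [List.head?_cons, Option.mem_some_iff, forall_eq, forall_eq'] at hhead
    subst hhead
    rw [List.Chain', List.isChain_cons_cons] at hchain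
    obtain ⟨⟨hst, hcol⟩, hchain2⟩ := hchain
    simp only at hst hcol
    rw [List.getLast?_cons_cons] at hlast
    have hnodup' : (s1 :: s2 :: (t :: S').map (fun s => s.2.1)).Nodup := by
      simpa using hnodup
    obtain ⟨j, P', hP, hCh, hhd, hlst, hsup, hstart, hend, hlc⟩ :=
      ih s2 t ⟨by simp, fun x hx => hsteps x (List.mem_cons_of_mem _ hx),
        hchain2, by simp [hst.symm], hlast, (List.nodup_cons.1 hnodup').2⟩
    have hA : L.A s1 s2 s3 s4 := hsteps (s1,s2,s3,s4) (List.mem_cons_self)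
    have has2 : s1 ≠ s2 := L.ne _ _ _ _ hA
    have hanotin : s1 ∉ s2 :: (t :: S').map (fun s => s.2.1) :=
      (List.nodup_cons.1 hnodup').1
    have hbmem : b ∈ (t :: S').map (fun s => s.2.1) := by
      have hne : (t :: S') ≠ [] := by simp
      have hb : ((t :: S').getLast hne).2.1 = b := by
        apply hlast
        rw [List.getLast?_eq_getLast hne]
        rfl
      exact List.mem_map.2 ⟨_, List.getLast_mem hne, hb⟩
    have hs2b : s2 ≠ b := by
      intro h
      exact (List.nodup_cons.1 (List.nodup_cons.1 hnodup').2).1 (h ▸ hbmem)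
    have hab : s1 ≠ b := fun h => hanotin (h ▸ List.mem_cons_of_mem _ hbmem)
    have hPne : P'.edges ≠ [] := by
      intro h
      apply hs2b
      have := Walk.eq_of_length_eq_zero (p := P')
        (by rw [← Walk.length_edges, h]; rfl)
      exact congrArg Prod.fst this
    obtain ⟨y, ys, hpe⟩ : ∃ y ys, P'.edges = y :: ys := by
      cases h : P'.edges with
      | nil => exact absurd h hPne
      | cons y ys => exact ⟨y, ys, rfl⟩
    have ne1 : s((s1,s3),(s2,s4)) ∉ M0 V := fun h => has2 (mem_M0_iff.1 h).1
    have me2 : s((s2,s4),(s2,t.2.2.1)) ∈ M0 V := mem_M0_iff.2 ⟨rfl, hcol⟩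
    have hnotin1 : (s1,s3) ∉ P'.support := by
      intro h
      exact hanotin (hsup _ h)
    have hnotin2 : (s2,s4) ∉ P'.support := by
      intro h
      exact hcol (hstart _ h rfl)
    refine ⟨j, Walk.cons (HG_adj_of_A hA) (Walk.cons (HG_adj_match hcol) P'),
      ?_, ?_, ?_, ?_, ?_, ?_, ?_, ?_⟩
    · rw [Walk.cons_isPath_iff, Walk.cons_isPath_iff]
      refine ⟨⟨hP, hnotin2⟩, ?_⟩
      simp only [Walk.support_cons, List.mem_cons]
      rintro (h | h)
      · exact has2 (congrArg Prod.fst h)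
      · exact hnotin1 h
    · simp only [AltList, Walk.edges_cons]
      rw [List.Chain', List.isChain_cons_cons]
      refine ⟨iff_of_false (fun h => ne1 h) (fun h => h me2), ?_⟩
      rw [List.isChain_cons]
      exact ⟨fun y hy => iff_of_true me2 (hhd y hy), hCh⟩
    · intro e he
      simp only [Walk.edges_cons, List.head?_cons, Option.mem_some_iff] at he
      subst he
      exact ne1
    · intro e he
      simp only [Walk.edges_cons] at he
      rw [List.getLast?_cons_cons, hpe, List.getLast?_cons_cons, ← hpe] at he
      exact hlst e he
    · intro x hx
      simp only [Walk.support_cons, List.mem_cons] at hx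
      rcases hx with rfl | rfl | h
      · simp
      · simp
      · have := hsup x h
        simp only [List.mem_cons, List.map_cons] at this ⊢
        tauto
    · intro x hx
      simp only [Walk.support_cons, List.mem_cons] at hx
      rcases hx with rfl | rfl | h
      · intro _; rfl
      · intro h2; exact absurd h2.symm has2
      · intro h2
        exact absurd (h2 ▸ hsup x h) hanotin
    · intro x hx
      simp only [Walk.support_cons, List.mem_cons] at hx
      rcases hx with rfl | rfl | h
      · intro h2; exact absurd h2 hab
      · intro h2; exact absurd h2 hs2b
      · exact hend x h
    · rw [List.getLast?_cons_cons]
      exact hlc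
end Fwd

section Bwd
variable {V : Type*} {L : Loc2Col V}

lemma bwdML (b : V) (j : Bool) (n : ℕ) :
    ∀ (u : V) (c : Bool) (P : (HG L).Walk (u,c) (b,j)),
    P.length ≤ n → P.IsPath → AltList (M0 V) P.edges →
    (∀ e ∈ P.edges.head?, e ∉ M0 V) → u ≠ b →
    (∀ k : Bool, ((u,k) : V × Bool) ∈ P.support → k = c) →
    ∃ S : List (Step V), IsCompatPath L u b S ∧
      (∀ s ∈ S.head?, s.2.2.1 = c) ∧
      (∀ s ∈ S.getLast?, ∀ e ∈ P.edges.getLast?,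
        (e ∈ M0 V → s.2.2.2 = !j) ∧ (e ∉ M0 V → s.2.2.2 = j)) ∧
      (∀ w ∈ S.map (fun s => s.2.1), ∃ k : Bool, ((w,k) : V × Bool) ∈ P.support.tail) := by
  induction n with
  | zero =>
    intro u c P hlen _ _ _ hub _
    exact absurd (congrArg Prod.fst (Walk.eq_of_length_eq_zero (Nat.le_zero.1 hlen))) hub
  | succ n ihn =>
    intro u c P hlen hpath halt hhd hub hyp
    cases P with
    | nil => exact absurd rfl hub
    | cons h q =>
      rename_i y
      obtain ⟨v, d⟩ := y
      have hne1 : s((u,c),(v,d)) ∉ M0 V := by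
        apply hhd
        rw [Walk.edges_cons, List.head?_cons]
        rfl
      have hA : L.A u v c d := by
        rcases h with ⟨h1, h2⟩ | hA
        · exact absurd (mem_M0_iff.2 ⟨h1, h2⟩) hne1
        · exact hA
      have huv : u ≠ v := L.ne _ _ _ _ hA
      cases q with
      | nil =>
        refine ⟨[(u, b, c, j)], ⟨by simp, ?_, by simp [List.Chain'], by simp, by simp, by simp [hub]⟩,
          by simp, ?_, ?_⟩
        · intro x hx
          rw [List.mem_singleton] at hx
          subst hx
          exact hA
        · intro s hs e he
          rw [List.getLast?_singleton, Option.mem_some_iff] at hs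
          simp only [Walk.edges_cons, Walk.edges_nil, List.getLast?_singleton,
            Option.mem_some_iff] at he
          subst hs
          subst he
          exact ⟨fun hm => absurd hm hne1, fun _ => rfl⟩
        · intro w hw
          rw [List.map_singleton, List.mem_singleton] at hw
          subst hw
          exact ⟨j, by simp⟩
      | cons h2 q2 =>
        rename_i z
        obtain ⟨z1, z2⟩ := z
        have halt' := halt
        simp only [AltList, List.Chain', Walk.edges_cons, List.isChain_cons_cons] at halt'
        have hf : s((v,d),(z1,z2)) ∈ M0 V := by
          by_contra hfm
          exact hne1 (halt'.1.mpr hfm)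
        have hz : z1 = v ∧ z2 = !d := by
          have := mem_M0_iff.1 hf
          refine ⟨this.1.symm, ?_⟩
          have hd := this.2
          cases d <;> cases z2 <;> first | rfl | exact absurd rfl hd
        obtain ⟨rfl, rfl⟩ := hz
        -- support facts
        have hsupnd : ((u,c) :: (z1,d) :: q2.support).Nodup := by
          have := hpath.support_nodup
          simpa [Walk.support_cons] using this
        have hvd_not : ((z1,d) : V × Bool) ∉ q2.support := by
          have := (List.nodup_cons.1 (List.nodup_cons.1 hsupnd).2).1
          exact this
        have huc_not : ((u,c) : V × Bool) ∉ (z1,d) :: q2.support := by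
          exact (List.nodup_cons.1 hsupnd).1
        by_cases hvb : z1 = b
        · subst hvb
          -- the walk must end here: q2 = nil, j = !d
          have hdj : j = !d := by
            have hbj : ((z1,j) : V × Bool) ∈ q2.support := Walk.end_mem_support q2
            by_contra hc2
            have : j = d := by cases j <;> cases d <;> first | rfl | exact absurd rfl hc2
            subst this
            exact hvd_not hbj
          subst hdj
          have hq2 : q2 = Walk.nil := by
            have : q2.IsPath := (hpath.of_cons).of_cons
            exact Walk.isPath_iff_eq_nil.1 this
          subst hq2
          refine ⟨[(u, z1, c, d)], ⟨by simp, ?_, by simp [List.Chain'], by simp, by simp, by simp [hub]⟩,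
            by simp, ?_, ?_⟩
          · intro x hx
            rw [List.mem_singleton] at hx
            subst hx
            exact hA
          · intro s hs e he
            rw [List.getLast?_singleton, Option.mem_some_iff] at hs
            simp only [Walk.edges_cons, Walk.edges_nil, List.getLast?_cons_cons,
              List.getLast?_singleton, Option.mem_some_iff] at he
            subst hs
            subst he
            refine ⟨fun _ => by simp, fun hm => absurd hf hm⟩
          · intro w hw
            rw [List.map_singleton, List.mem_singleton] at hw
            subst hw
            exact ⟨d, by simp [Walk.support_cons]⟩
        · -- recurse
          have hq2len : q2.length ≤ n := by
            simp only [Walk.length_cons] at hlen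
            omega
          have hq2path : q2.IsPath := (hpath.of_cons).of_cons
          have hq2alt : AltList (M0 V) q2.edges := (List.isChain_cons.1 halt'.2).2
          have hq2hd : ∀ e ∈ q2.edges.head?, e ∉ M0 V := by
            intro e he
            have hrel := (List.isChain_cons.1 halt'.2).1 e he
            exact hrel.mp hf
          have hq2hyp : ∀ k : Bool, ((z1,k) : V × Bool) ∈ q2.support → k = !d := by
            intro k hk
            by_contra hkne
            have : k = d := by cases k <;> cases d <;> first | rfl | exact absurd rfl hkne
            subst this
            exact hvd_not hk
          obtain ⟨S', hcp, hhc, hlcinfo, hwmem⟩ :=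
            ihn z1 (!d) q2 hq2len hq2path hq2alt hq2hd hvb hq2hyp
          obtain ⟨hS'ne, hS'steps, hS'chain, hS'head, hS'last, hS'nodup⟩ := hcp
          obtain ⟨y0, ys, rfl⟩ : ∃ y0 ys, S' = y0 :: ys := by
            cases S' with
            | nil => exact absurd rfl hS'ne
            | cons y0 ys => exact ⟨y0, ys, rfl⟩
          have hy0v : y0.1 = z1 := hS'head y0 rfl
          have hy0c : y0.2.2.1 = !d := hhc y0 rfl
          have hunotin : u ∉ (z1 :: (y0 :: ys).map (fun s => s.2.1)) := by
            intro hu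
            rcases List.mem_cons.1 hu with h' | h'
            · exact huv h'
            · obtain ⟨k, hk⟩ := hwmem u h'
              have hkmem : ((u,k) : V × Bool) ∈ q2.support := List.mem_of_mem_tail hk
              have : k = c := hyp k (by
                simp only [Walk.support_cons, List.mem_cons]
                exact Or.inr (Or.inr hkmem))
              subst this
              exact huc_not (by
                simp only [List.mem_cons]
                exact Or.inr hkmem)
          have hq2ne : q2.edges ≠ [] := by
            intro hnil
            apply hvb
            have := Walk.eq_of_length_eq_zero (p := q2)
              (by rw [← Walk.length_edges, hnil]; rfl)
            exact congrArg Prod.fst this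
          obtain ⟨e0, es, hq2e⟩ : ∃ e0 es, q2.edges = e0 :: es := by
            cases hx : q2.edges with
            | nil => exact absurd hx hq2ne
            | cons e0 es => exact ⟨e0, es, rfl⟩
          refine ⟨(u, z1, c, d) :: y0 :: ys, ⟨by simp, ?_, ?_, by simp, ?_, ?_⟩,
            by simp, ?_, ?_⟩
          · intro x hx
            rcases List.mem_cons.1 hx with rfl | h'
            · exact hA
            · exact hS'steps x h'
          · rw [List.Chain', List.isChain_cons_cons]
            refine ⟨⟨hy0v.symm, ?_⟩, hS'chain⟩
            rw [hy0c]
            simp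
          · rw [List.getLast?_cons_cons]
            exact hS'last
          · rw [List.nodup_cons]
            constructor
            · intro hu
              apply hunotin
              simpa using hu
            · simpa using hS'nodup
          · rw [List.getLast?_cons_cons]
            intro s hs e he
            simp only [Walk.edges_cons] at he
            rw [List.getLast?_cons_cons, hq2e, List.getLast?_cons_cons, ← hq2e] at he
            exact hlcinfo s hs e he
          · intro w hw
            simp only [List.map_cons, List.mem_cons] at hw
            rcases hw with rfl | hw'
            · exact ⟨d, by simp only [Walk.support_cons, List.tail_cons, List.mem_cons]; exact Or.inl trivial⟩
            · obtain ⟨k, hk⟩ := hwmem w (by simpa using hw')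
              refine ⟨k, ?_⟩
              simp only [Walk.support_cons, List.tail_cons, List.mem_cons]
              exact Or.inr (List.mem_of_mem_tail hk)

end Bwd

section Top
open SimpleGraph Walk
variable {V : Type*} {L : Loc2Col V}

lemma head_edge_structure {W : Type*} {G : SimpleGraph W} {x z : W} (P : G.Walk x z) :
    ∀ f ∈ P.edges.head?, ∃ y, f = s(x, y) ∧ y ∈ P.support.tail := by
  cases P with
  | nil => simp
  | cons h q =>
    intro f hf
    rw [Walk.edges_cons, List.head?_cons, Option.mem_some_iff] at hf
    exact ⟨_, hf.symm, by simp⟩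

lemma pathFwdTop {a b : V} (h : ∃ S, IsCompatPath L a b S) :
    ∃ (i j : Bool) (P : (HG L).Walk (a,i) (b,j)), P.IsPath ∧ AltList (M0 V) P.edges := by
  obtain ⟨S, hS⟩ := h
  obtain ⟨s, S0, rfl⟩ : ∃ s S0, S = s :: S0 := by
    cases S with
    | nil => exact absurd rfl hS.1
    | cons s S0 => exact ⟨s, S0, rfl⟩
  obtain ⟨j, P, hP, hCh, -⟩ := fwdML b S0 a s hS
  exact ⟨s.2.2.1, j, P, hP, hCh⟩

lemma pathBwdTop {a b : V} (hab : a ≠ b)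
    (h : ∃ (i j : Bool) (P : (HG L).Walk (a,i) (b,j)), P.IsPath ∧ AltList (M0 V) P.edges) :
    ∃ S, IsCompatPath L a b S := by
  classical
  obtain ⟨i, j, P, hP, halt⟩ := h
  cases P with
  | nil => exact absurd rfl hab
  | cons h q =>
    rename_i y
    obtain ⟨v, d⟩ := y
    by_cases hm : s(((a,i) : V × Bool), (v,d)) ∈ M0 V
    · obtain ⟨hav, hid⟩ := mem_M0_iff.1 hm
      subst hav
      have hdi : d = !i := by
        cases i <;> cases d <;> first | rfl | exact absurd rfl hid
      subst hdi
      have hqhd : ∀ f ∈ q.edges.head?, f ∉ M0 V := by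
        intro f hf
        have h2 := halt
        rw [AltList, List.Chain', Walk.edges_cons, List.isChain_cons] at h2
        exact (h2.1 f hf).mp hm
      have hhyp : ∀ k : Bool, ((a,k) : V × Bool) ∈ q.support → k = !i := by
        intro k hk
        by_contra hkne
        have hki : k = i := by
          cases k <;> cases i <;> first | rfl | exact absurd rfl hkne
        subst hki
        exact (List.nodup_cons.1 (by
          simpa [Walk.support_cons] using hP.support_nodup)).1 hk
      obtain ⟨S, hS, -⟩ := bwdML b j q.length a (!i) q le_rfl hP.of_cons
        (by rw [AltList, Walk.edges_cons] at halt; exact (List.isChain_cons.1 halt).2)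
        hqhd hab hhyp
      exact ⟨S, hS⟩
    · by_cases hsup : ((a, !i) : V × Bool) ∈ (Walk.cons h q).support
      · have hQpath := hP.dropUntil hsup
        have hspec := Walk.take_spec (Walk.cons h q) hsup
        have hsuffix : ((Walk.cons h q).dropUntil _ hsup).edges <:+ (Walk.cons h q).edges :=
          ⟨((Walk.cons h q).takeUntil _ hsup).edges, by rw [← Walk.edges_append, hspec]⟩
        have hQalt : AltList (M0 V) ((Walk.cons h q).dropUntil _ hsup).edges :=
          List.IsChain.suffix halt hsuffix
        have hsupp : (Walk.cons h q).support =
            ((Walk.cons h q).takeUntil _ hsup).support ++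
            ((Walk.cons h q).dropUntil _ hsup).support.tail := by
          conv_lhs => rw [← hspec]
          rw [Walk.support_append]
        have hnd := hP.support_nodup
        rw [hsupp] at hnd
        have key : ((a,i) : V × Bool) ∉ ((Walk.cons h q).dropUntil _ hsup).support.tail := by
          intro hmem
          exact (List.nodup_append'.1 hnd).2.2 (Walk.start_mem_support _) hmem
        have hQhyp : ∀ k : Bool, ((a,k) : V × Bool) ∈
            ((Walk.cons h q).dropUntil _ hsup).support → k = !i := by
          intro k hk
          by_contra hkne
          have hki : k = i := by
            cases k <;> cases i <;> first | rfl | exact absurd rfl hkne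
          subst hki
          rw [Walk.support_eq_cons] at hk
          rcases List.mem_cons.1 hk with h' | h'
          · have := congrArg Prod.snd h'
            simp at this
          · exact key h'
        have hQhd : ∀ f ∈ ((Walk.cons h q).dropUntil _ hsup).edges.head?, f ∉ M0 V := by
          intro f hf hfm
          obtain ⟨yy, rfl, hy⟩ := head_edge_structure _ f hf
          obtain ⟨y1, y2⟩ := yy
          obtain ⟨hay, hiy⟩ := mem_M0_iff.1 hfm
          subst hay
          have hy2 : y2 = i := by
            cases i <;> cases y2 <;> first | rfl | exact absurd rfl hiy
          subst hy2
          exact key hy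
        obtain ⟨S, hS, -⟩ := bwdML b j _ a (!i) ((Walk.cons h q).dropUntil _ hsup)
          le_rfl hQpath hQalt hQhd hab hQhyp
        exact ⟨S, hS⟩
      · have hhyp : ∀ k : Bool, ((a,k) : V × Bool) ∈ (Walk.cons h q).support → k = i := by
          intro k hk
          by_contra hkne
          have hki : k = !i := by
            cases k <;> cases i <;> first | rfl | exact absurd rfl hkne
          subst hki
          exact hsup hk
        have hhd : ∀ f ∈ (Walk.cons h q).edges.head?, f ∉ M0 V := by
          intro f hf
          rw [Walk.edges_cons, List.head?_cons, Option.mem_some_iff] at hf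
          subst hf
          exact hm
        obtain ⟨S, hS, -⟩ := bwdML b j _ a i (Walk.cons h q) le_rfl hP halt hhd hab hhyp
        exact ⟨S, hS⟩

end Top
section Cyc
open SimpleGraph Walk
variable {V : Type*} {L : Loc2Col V}

lemma cycFwdTop {a : V} (h : ∃ S, IsCompatCycle L a S) :
    ∃ (i : Bool) (C : (HG L).Walk (a,i) (a,i)), C.IsCycle ∧ AltCyclic (M0 V) C := by
  obtain ⟨S, hne, hsteps, hchain, hhead, hlast, hclose, hnodup⟩ := h
  obtain ⟨s, S', rfl⟩ : ∃ s S', S = s :: S' := by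
    cases S with
    | nil => exact absurd rfl hne
    | cons s S' => exact ⟨s, S', rfl⟩
  obtain ⟨s1, s2, s3, s4⟩ := s
  have hs1 : s1 = a := by simpa using hhead
  subst hs1
  obtain ⟨t, S'', rfl⟩ : ∃ t S'', S' = t :: S'' := by
    cases S' with
    | nil =>
      exfalso
      have h2 : s2 = s1 := by simpa using hlast
      have h3 := L.ne _ _ _ _ (hsteps _ (List.mem_singleton_self _))
      simp only at h3
      exact h3 h2.symm
    | cons t S'' => exact ⟨t, S'', rfl⟩
  have hchain0 := hchain
  have hlast0 := hlast
  rw [List.Chain', List.isChain_cons_cons] at hchain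
  obtain ⟨⟨hst, hcol⟩, hchain2⟩ := hchain
  simp only at hst hcol
  rw [List.getLast?_cons_cons] at hlast
  have hSne : ((s1,s2,s3,s4) :: t :: S'' : List (Step V)) ≠ [] := by simp
  have hmapfst := shift_map _ s1 hchain0 hhead hSne
  have hsnd : (((s1,s2,s3,s4) :: t :: S'').map (fun s => s.2.1)).Nodup := by
    have h1 : (s1 :: ((((s1,s2,s3,s4) :: t :: S'' : List (Step V))).map
        (fun s => s.2.1)).dropLast).Nodup := hmapfst ▸ hnodup
    rw [snd_map_eq hSne hlast0]
    rw [List.nodup_cons] at h1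
    rw [List.nodup_append']
    exact ⟨h1.2, List.nodup_singleton _,
      fun x hx hx2 => h1.1 ((List.mem_singleton.1 hx2) ▸ hx)⟩
  have hcp : IsCompatPath L s2 s1 (t :: S'') :=
    ⟨by simp, fun x hx => hsteps x (List.mem_cons_of_mem _ hx), hchain2,
      by simp [hst.symm], hlast, by simpa using hsnd⟩
  obtain ⟨j, P', hP, hCh, hhd, hlst, hsupP, hstart, hend, hlc⟩ := fwdML s1 S'' s2 t hcp
  have htne : (t :: S'') ≠ [] := by simp
  have hgl := List.getLast?_eq_getLast (l := t :: S'') htne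
  have hjs3 : j ≠ s3 := by
    have h1 : ((t :: S'').getLast htne).2.2.2 = j := hlc _ (by rw [hgl]; rfl)
    have h2 : ((t :: S'').getLast htne).2.2.2 ≠ ((s1,s2,s3,s4) : Step V).2.2.1 := by
      refine hclose _ ?_ _ rfl
      rw [List.getLast?_cons_cons, hgl]
      rfl
    simp only at h2
    intro hj
    exact h2 (h1.trans hj)
  have has2 : s1 ≠ s2 := by
    have h1 := hnodup
    simp only [List.map_cons, List.nodup_cons] at h1
    intro h2
    apply h1.1
    rw [h2, hst]
    exact List.mem_cons_self
  have hA0 : L.A s1 s2 s3 s4 := hsteps _ (List.mem_cons_self)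
  have e0 : (HG L).Adj (s1, s3) (s2, s4) := HG_adj_of_A hA0
  have f1 : (HG L).Adj (s2, s4) (s2, t.2.2.1) := HG_adj_match hcol
  have hE : (HG L).Adj ((s1, j) : V × Bool) (s1, s3) := HG_adj_match hjs3
  have hne0 : s(((s1,s3) : V × Bool),(s2,s4)) ∉ M0 V :=
    fun hm => has2 (mem_M0_iff.1 hm).1
  have hme2 : s(((s2,s4) : V × Bool),(s2,t.2.2.1)) ∈ M0 V := mem_M0_iff.2 ⟨rfl, hcol⟩
  have hmeE : s(((s1,j) : V × Bool),(s1,s3)) ∈ M0 V := mem_M0_iff.2 ⟨rfl, hjs3⟩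
  have hPne : P'.edges ≠ [] := by
    intro hnil
    apply has2
    have := Walk.eq_of_length_eq_zero (p := P')
      (by rw [← Walk.length_edges, hnil]; rfl)
    exact (congrArg Prod.fst this).symm
  obtain ⟨y, ys, hye⟩ : ∃ y ys, P'.edges = y :: ys := by
    cases hx : P'.edges with
    | nil => exact absurd hx hPne
    | cons y ys => exact ⟨y, ys, rfl⟩
  refine ⟨s3, Walk.cons e0 (Walk.cons f1 (P'.append (Walk.cons hE Walk.nil))), ?_, ?_⟩
  · rw [Walk.cons_isCycle_iff]
    constructor
    · rw [Walk.cons_isPath_iff]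
      constructor
      · rw [Walk.isPath_def, Walk.support_append]
        simp only [Walk.support_cons, Walk.support_nil, List.tail_cons]
        rw [List.nodup_append']
        refine ⟨hP.support_nodup, List.nodup_singleton _, ?_⟩
        intro x hx hx2
        rw [List.mem_singleton] at hx2
        subst hx2
        exact hjs3 ((hend _ hx rfl).symm)
      · rw [Walk.support_append]
        simp only [Walk.support_cons, Walk.support_nil, List.tail_cons]
        intro hmem
        rcases List.mem_append.1 hmem with h' | h'
        · exact hcol (hstart _ h' rfl)
        · rw [List.mem_singleton] at h'
          exact has2 (congrArg Prod.fst h').symm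
    · rw [Walk.edges_cons, Walk.edges_append]
      simp only [Walk.edges_cons, Walk.edges_nil]
      intro hmem
      rcases List.mem_cons.1 hmem with h' | h'
      · rw [Sym2.eq_iff] at h'
        rcases h' with ⟨h1, h2⟩ | ⟨h1, h2⟩
        · exact has2 (congrArg Prod.fst h1)
        · exact has2 (congrArg Prod.fst h1)
      · rcases List.mem_append.1 h' with h'' | h''
        · exact hjs3 ((hend _ (Walk.fst_mem_support_of_mem_edges P' h'') rfl).symm)
        · rw [List.mem_singleton, Sym2.eq_iff] at h''
          rcases h'' with ⟨h1, h2⟩ | ⟨h1, h2⟩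
          · exact has2 (congrArg Prod.fst h2).symm
          · exact has2 (congrArg Prod.fst h2).symm
  · apply (cyc_iff (fun e f => (e ∈ M0 V ↔ f ∉ M0 V)) _).2
    constructor
    · simp only [Walk.edges_cons, Walk.edges_append, Walk.edges_nil]
      rw [List.Chain', List.isChain_cons_cons]
      refine ⟨iff_of_false hne0 (fun hh => hh hme2), ?_⟩
      rw [List.isChain_cons]
      constructor
      · intro z hz
        rw [hye] at hz
        simp only [List.cons_append, List.head?_cons, Option.mem_some_iff] at hz
        subst hz
        exact iff_of_true hme2 (hhd y (by rw [hye]; rfl))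
      · rw [List.isChain_append]
        refine ⟨hCh, List.isChain_singleton _, ?_⟩
        intro x hx z hz
        simp only [List.head?_cons, Option.mem_some_iff] at hz
        subst hz
        exact iff_of_false (hlst x hx) (fun hh => hh hmeE)
    · have hCe : (Walk.cons e0 (Walk.cons f1 (P'.append (Walk.cons hE Walk.nil)))).edges
          = (s(((s1,s3) : V × Bool),(s2,s4)) :: s(((s2,s4) : V × Bool),(s2,t.2.2.1))
            :: P'.edges) ++ [s(((s1,j) : V × Bool),(s1,s3))] := by
        simp [Walk.edges_cons, Walk.edges_append]
      intro x hx z hz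
      rw [hCe, List.getLast?_concat, Option.mem_some_iff] at hx
      rw [hCe, List.cons_append, List.head?_cons, Option.mem_some_iff] at hz
      subst hx
      subst hz
      exact iff_of_true hmeE hne0

lemma cycBwdTop {a : V} (h : ∃ (i : Bool) (C : (HG L).Walk (a,i) (a,i)),
    C.IsCycle ∧ AltCyclic (M0 V) C) :
    ∃ S, IsCompatCycle L a S := by
  obtain ⟨i, C, hcyc, haltc⟩ := h
  obtain ⟨hch, hwrap⟩ := (cyc_iff (fun e f => (e ∈ M0 V ↔ f ∉ M0 V)) C.edges).1 haltc
  cases C with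
  | nil => exact absurd rfl hcyc.ne_nil
  | cons h1 C₁ =>
    rename_i y
    obtain ⟨v, d⟩ := y
    obtain ⟨hC₁path, he_notin⟩ := (Walk.cons_isCycle_iff C₁ h1).1 hcyc
    by_cases hm : s(((a,i) : V × Bool), (v,d)) ∈ M0 V
    · -- first edge is a matching edge
      obtain ⟨hav, hid⟩ := mem_M0_iff.1 hm
      subst hav
      cases C₁ with
      | nil => exact absurd rfl hid
      | cons h2 C₂ =>
        rename_i z
        obtain ⟨z1, z2⟩ := z
        simp only [Walk.edges_cons] at hch hwrap
        rw [List.Chain', List.isChain_cons_cons] at hch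
        have hg_not : s(((a,d) : V × Bool),(z1,z2)) ∉ M0 V := hch.1.mp hm
        have hA1 : L.A a z1 d z2 := by
          rcases h2 with ⟨ha1, ha2⟩ | hA
          · exact absurd (mem_M0_iff.2 ⟨ha1, ha2⟩) hg_not
          · exact hA
        have haz1 : a ≠ z1 := L.ne _ _ _ _ hA1
        cases C₂ with
        | nil => exact absurd rfl haz1
        | cons h3 C₃ =>
          rename_i w
          obtain ⟨w1, w2⟩ := w
          simp only [Walk.edges_cons] at hch hwrap
          rw [List.isChain_cons_cons] at hch
          have hf_mem : s(((z1,z2) : V × Bool),(w1,w2)) ∈ M0 V := by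
            by_contra hfm
            exact hg_not (hch.2.1.mpr hfm)
          obtain ⟨hzw, hz2w⟩ := mem_M0_iff.1 hf_mem
          subst hzw
          have hw2 : w2 = !z2 := by
            cases z2 <;> cases w2 <;> first | rfl | exact absurd rfl hz2w
          subst hw2
          -- C₃ : Walk (z1, !z2) (a, i)
          have hpath3 : C₃.IsPath := (hC₁path.of_cons).of_cons
          have halt3 : AltList (M0 V) C₃.edges := (List.isChain_cons.1 hch.2.2).2
          have hhd3 : ∀ e ∈ C₃.edges.head?, e ∉ M0 V := by
            intro e he
            exact ((List.isChain_cons.1 hch.2.2).1 e he).mp hf_mem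
          have hz1a : z1 ≠ a := haz1.symm
          have hsupnd : (((a,d) : V × Bool) :: (z1,z2) :: C₃.support).Nodup := by
            simpa [Walk.support_cons] using hC₁path.support_nodup
          have hyp3 : ∀ k : Bool, ((z1,k) : V × Bool) ∈ C₃.support → k = !z2 := by
            intro k hk
            by_contra hkne
            have hkz : k = z2 := by
              cases k <;> cases z2 <;> first | rfl | exact absurd rfl hkne
            subst hkz
            exact (List.nodup_cons.1 (List.nodup_cons.1 hsupnd).2).1 hk
          obtain ⟨S', hcp', hhc', hlinfo', -⟩ :=
            bwdML a i C₃.length z1 (!z2) C₃ le_rfl hpath3 halt3 hhd3 hz1a hyp3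
          obtain ⟨hS'ne, hS'steps, hS'chain, hS'head, hS'last, hS'nodup⟩ := hcp'
          have hC3ne : C₃.edges ≠ [] := by
            intro hnil
            apply hz1a
            have := Walk.eq_of_length_eq_zero (p := C₃)
              (by rw [← Walk.length_edges, hnil]; rfl)
            exact congrArg Prod.fst this
          obtain ⟨y0, ys0, hC3e⟩ : ∃ y0 ys0, C₃.edges = y0 :: ys0 := by
            cases hx : C₃.edges with
            | nil => exact absurd hx hC3ne
            | cons y0 ys0 => exact ⟨y0, ys0, rfl⟩
          have hlemem : C₃.edges.getLast? = some (C₃.edges.getLast hC3ne) :=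
            List.getLast?_eq_getLast hC3ne
          have hgleq : (s(((a,i) : V × Bool),(a,d)) :: s(((a,d) : V × Bool),(z1,z2))
              :: s(((z1,z2) : V × Bool),(z1,!z2)) :: C₃.edges).getLast? = C₃.edges.getLast? := by
            rw [List.getLast?_cons_cons, List.getLast?_cons_cons, hC3e,
              List.getLast?_cons_cons]
          have hle_not : C₃.edges.getLast hC3ne ∉ M0 V := by
            have hw := hwrap (C₃.edges.getLast hC3ne)
              (by rw [hgleq, hlemem]; rfl)
              (s(((a,i) : V × Bool),(a,d))) rfl
            exact fun hlem => (hw.mp hlem) hm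
          have hlastcolor : ∀ s ∈ S'.getLast?, s.2.2.2 = i := by
            intro s hs
            exact (hlinfo' s hs _ (by rw [hlemem]; rfl)).2 hle_not
          obtain ⟨q0, qs, rfl⟩ : ∃ q0 qs, S' = q0 :: qs := by
            cases S' with
            | nil => exact absurd rfl hS'ne
            | cons q0 qs => exact ⟨q0, qs, rfl⟩
          have hq0 : q0.1 = z1 := hS'head q0 rfl
          have hq0c : q0.2.2.1 = !z2 := hhc' q0 rfl
          have hmf := shift_map _ z1 hS'chain hS'head hS'ne
          have hms := snd_map_eq hS'ne hS'last
          have hnd2 := hS'nodup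
          rw [hms] at hnd2
          rw [List.nodup_cons, List.nodup_append'] at hnd2
          refine ⟨(a, z1, d, z2) :: q0 :: qs, by simp, ?_, ?_, by simp, ?_, ?_, ?_⟩
          · intro x hx
            rcases List.mem_cons.1 hx with rfl | h'
            · exact hA1
            · exact hS'steps x h'
          · rw [List.Chain', List.isChain_cons_cons]
            refine ⟨⟨hq0.symm, ?_⟩, hS'chain⟩
            rw [hq0c]
            simp
          · rw [List.getLast?_cons_cons]
            exact hS'last
          · rw [List.getLast?_cons_cons]
            intro x hx yy hyy
            simp only [List.head?_cons, Option.mem_some_iff] at hyy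
            subst hyy
            have := hlastcolor x hx
            rw [this]
            simp only
            exact fun hh => hid hh
          · rw [List.map_cons, List.nodup_cons]
            have hdl : (List.map (fun s => s.2.1) (q0 :: qs)).dropLast.Nodup := hnd2.2.1
            have hz1dl : z1 ∉ (List.map (fun s => s.2.1) (q0 :: qs)).dropLast := by
              intro hz
              exact hnd2.1 (List.mem_append_left _ hz)
            have hadl : a ∉ (List.map (fun s => s.2.1) (q0 :: qs)).dropLast := by
              intro hz
              exact hnd2.2.2.2 hz (List.mem_singleton_self _)
            constructor
            · rw [hmf]
              intro hmem
              rcases List.mem_cons.1 hmem with h' | h'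
              · exact haz1 h'
              · exact hadl h'
            · rw [hmf]
              exact List.nodup_cons.2 ⟨hz1dl, hdl⟩
    · -- first edge is a graph edge
      have hA : L.A a v i d := by
        rcases h1 with ⟨ha1, ha2⟩ | hA
        · exact absurd (mem_M0_iff.2 ⟨ha1, ha2⟩) hm
        · exact hA
      have hav : a ≠ v := L.ne _ _ _ _ hA
      cases C₁ with
      | nil => exact absurd rfl hav
      | cons h2 C₂ =>
        rename_i z
        obtain ⟨z1, z2⟩ := z
        simp only [Walk.edges_cons] at hch hwrap
        rw [List.Chain', List.isChain_cons_cons] at hch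
        have hg_mem : s(((v,d) : V × Bool),(z1,z2)) ∈ M0 V := by
          by_contra hgm
          exact hm (hch.1.mpr hgm)
        obtain ⟨hvz, hdz⟩ := mem_M0_iff.1 hg_mem
        subst hvz
        have hz2 : z2 = !d := by
          cases d <;> cases z2 <;> first | rfl | exact absurd rfl hdz
        subst hz2
        -- C₂ : Walk (v, !d) (a, i)
        have hpath2 : C₂.IsPath := hC₁path.of_cons
        have halt2 : AltList (M0 V) C₂.edges := (List.isChain_cons.1 hch.2).2
        have hhd2 : ∀ e ∈ C₂.edges.head?, e ∉ M0 V := by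
          intro e he
          exact ((List.isChain_cons.1 hch.2).1 e he).mp hg_mem
        have hva : v ≠ a := hav.symm
        have hsupnd : (((v,d) : V × Bool) :: C₂.support).Nodup := by
          simpa [Walk.support_cons] using hC₁path.support_nodup
        have hyp2 : ∀ k : Bool, ((v,k) : V × Bool) ∈ C₂.support → k = !d := by
          intro k hk
          by_contra hkne
          have hkd : k = d := by
            cases k <;> cases d <;> first | rfl | exact absurd rfl hkne
          subst hkd
          exact (List.nodup_cons.1 hsupnd).1 hk
        obtain ⟨S', hcp', hhc', hlinfo', -⟩ :=
          bwdML a i C₂.length v (!d) C₂ le_rfl hpath2 halt2 hhd2 hva hyp2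
        obtain ⟨hS'ne, hS'steps, hS'chain, hS'head, hS'last, hS'nodup⟩ := hcp'
        have hC2ne : C₂.edges ≠ [] := by
          intro hnil
          apply hva
          have := Walk.eq_of_length_eq_zero (p := C₂)
            (by rw [← Walk.length_edges, hnil]; rfl)
          exact congrArg Prod.fst this
        obtain ⟨y0, ys0, hC2e⟩ : ∃ y0 ys0, C₂.edges = y0 :: ys0 := by
          cases hx : C₂.edges with
          | nil => exact absurd hx hC2ne
          | cons y0 ys0 => exact ⟨y0, ys0, rfl⟩
        have hlemem : C₂.edges.getLast? = some (C₂.edges.getLast hC2ne) :=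
          List.getLast?_eq_getLast hC2ne
        have hgleq : (s(((a,i) : V × Bool),(v,d)) :: s(((v,d) : V × Bool),(v,!d))
            :: C₂.edges).getLast? = C₂.edges.getLast? := by
          rw [List.getLast?_cons_cons, hC2e, List.getLast?_cons_cons]
        have hle_mem : C₂.edges.getLast hC2ne ∈ M0 V := by
          have hw := hwrap (C₂.edges.getLast hC2ne)
            (by rw [hgleq, hlemem]; rfl)
            (s(((a,i) : V × Bool),(v,d))) rfl
          exact hw.mpr hm
        have hlastcolor : ∀ s ∈ S'.getLast?, s.2.2.2 = !i := by
          intro s hs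
          exact (hlinfo' s hs _ (by rw [hlemem]; rfl)).1 hle_mem
        obtain ⟨q0, qs, rfl⟩ : ∃ q0 qs, S' = q0 :: qs := by
          cases S' with
          | nil => exact absurd rfl hS'ne
          | cons q0 qs => exact ⟨q0, qs, rfl⟩
        have hq0 : q0.1 = v := hS'head q0 rfl
        have hq0c : q0.2.2.1 = !d := hhc' q0 rfl
        have hmf := shift_map _ v hS'chain hS'head hS'ne
        have hms := snd_map_eq hS'ne hS'last
        have hnd2 := hS'nodup
        rw [hms] at hnd2
        rw [List.nodup_cons, List.nodup_append'] at hnd2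
        refine ⟨(a, v, i, d) :: q0 :: qs, by simp, ?_, ?_, by simp, ?_, ?_, ?_⟩
        · intro x hx
          rcases List.mem_cons.1 hx with rfl | h'
          · exact hA
          · exact hS'steps x h'
        · rw [List.Chain', List.isChain_cons_cons]
          refine ⟨⟨hq0.symm, ?_⟩, hS'chain⟩
          rw [hq0c]
          simp
        · rw [List.getLast?_cons_cons]
          exact hS'last
        · rw [List.getLast?_cons_cons]
          intro x hx yy hyy
          simp only [List.head?_cons, Option.mem_some_iff] at hyy
          subst hyy
          have := hlastcolor x hx
          rw [this]
          simp
        · rw [List.map_cons, List.nodup_cons]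
          have hdl : (List.map (fun s => s.2.1) (q0 :: qs)).dropLast.Nodup := hnd2.2.1
          have hz1dl : v ∉ (List.map (fun s => s.2.1) (q0 :: qs)).dropLast := by
            intro hz
            exact hnd2.1 (List.mem_append_left _ hz)
          have hadl : a ∉ (List.map (fun s => s.2.1) (q0 :: qs)).dropLast := by
            intro hz
            exact hnd2.2.2.2 hz (List.mem_singleton_self _)
          constructor
          · rw [hmf]
            intro hmem
            rcases List.mem_cons.1 hmem with h' | h'
            · exact hav h'
            · exact hadl h'
          · rw [hmf]
            exact List.nodup_cons.2 ⟨hz1dl, hdl⟩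
end Cyc
/-- The bijection between locally 2-colored graphs and graphs on `V × Bool`
carrying the canonical perfect matching `M0 V`, under which compatible paths
correspond to alternating paths and compatible cycles to alternating cycles. -/
theorem stmt11 {V : Type*} [Fintype V] :
    ∃ F : Loc2Col V ≃ {H : SimpleGraph (V × Bool) // IsPerfectMatching H (M0 V)},
      (∀ (L : Loc2Col V) (a b : V), a ≠ b →
        ((∃ S, IsCompatPath L a b S) ↔
          ∃ (i j : Bool) (P : (F L).1.Walk (a, i) (b, j)),
            P.IsPath ∧ AltList (M0 V) P.edges)) ∧
      (∀ (L : Loc2Col V) (a : V),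
        ((∃ S, IsCompatCycle L a S) ↔
          ∃ (i : Bool) (C : (F L).1.Walk (a, i) (a, i)),
            C.IsCycle ∧ AltCyclic (M0 V) C)) := by
  refine ⟨FEquiv V, ?_, ?_⟩
  · intro L a b hab
    exact ⟨fun h => pathFwdTop h, fun h => pathBwdTop hab h⟩
  · intro L a
    exact ⟨fun h => cycFwdTop h, fun h => cycBwdTop h⟩
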